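/- Let α, β be real numbers, let Φ_{α,β}(x) = ∫_Ω e^{−Tr z} (det z)^{α} (det(xᵀ z x))^{β} dz ∈ [0,∞], and let 𝕀_d ∈ M_{n,d}(ℝ) be the matrix whose top d×d block is the identity and whose remaining rows are zero. Then for every x ∈ M_{n,d}(ℝ) of rank d, Φ_{α,β}(x) = det(xᵀx)^{β} · Φ_{α,β}(𝕀_d), as an equality in [0,∞]. -/

import Mathlib

/-!
Factor `x = U 𝕀_d p` with `U` orthogonal and `p` square: this is a QR decomposition of `x`
padded by zero columns to a square matrix, since an upper triangular matrix maps the span of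
the first `d` coordinates into itself. The congruence `z ↦ Uᵀ z U` is a linear isometry of
`Sym_n(ℝ)` preserving `Ω`, the trace and the determinant, so it removes `U` from `Φ`. Finally
`det ((y p)ᵀ z (y p)) = det (pᵀ p) · det (yᵀ z y)` pulls `p` out of `Φ` as the factor
`det (pᵀ p)^β = det (xᵀ x)^β`.
-/

open Matrix Complex MeasureTheory

/-! ## The space `V = Sym_n(ℝ)` of real symmetric matrices, with the Euclidean
measure induced by the inner product `⟪z, w⟫ = Tr (z w)`. -/

/-- The submodule of symmetric `n × n` real matrices. -/
def SymSet (n : ℕ) : Submodule ℝ (Matrix (Fin n) (Fin n) ℝ) where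
  carrier := {A | A.IsSymm}
  add_mem' := fun ha hb => ha.add hb
  zero_mem' := Matrix.isSymm_zero
  smul_mem' := fun c _ h => h.smul c

/-- The space `V` of symmetric `n × n` real matrices. -/
def SymMat (n : ℕ) := {A : Matrix (Fin n) (Fin n) ℝ // A.IsSymm}

namespace SymMat

variable {n : ℕ}

/-- The underlying matrix of an element of `SymMat n`. -/
def mat (z : SymMat n) : Matrix (Fin n) (Fin n) ℝ := z.1

lemma isSymm (z : SymMat n) : z.mat.IsSymm := z.2

instance : AddCommGroup (SymMat n) := inferInstanceAs (AddCommGroup ↥(SymSet n))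
noncomputable instance : Module ℝ (SymMat n) := inferInstanceAs (Module ℝ ↥(SymSet n))
instance : FiniteDimensional ℝ (SymMat n) :=
  inferInstanceAs (FiniteDimensional ℝ ↥(SymSet n))

lemma mat_add (z w : SymMat n) : (z + w).mat = z.mat + w.mat := rfl
lemma mat_smul (c : ℝ) (z : SymMat n) : (c • z).mat = c • z.mat := rfl

/-- The inner product `⟪z, w⟫ = Tr (z w)` on `SymMat n`. -/
noncomputable def core (n : ℕ) : InnerProductSpace.Core ℝ (SymMat n) where
  inner z w := (z.mat * w.mat).trace
  conj_inner_symm := by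
    intro x y
    simpa using (Matrix.trace_mul_comm y.mat x.mat)
  re_inner_nonneg := by
    intro x
    have key : 0 ≤ (x.mat * x.mat).trace := by
      rw [Matrix.trace]
      apply Finset.sum_nonneg
      intro i _
      rw [Matrix.diag_apply, Matrix.mul_apply]
      apply Finset.sum_nonneg
      intro j _
      rw [x.isSymm.apply i j]
      exact mul_self_nonneg _
    simpa using key
  definite := by
    intro x hx
    have hz := x.isSymm
    have expand : (x.mat * x.mat).trace = ∑ i, ∑ j, x.mat i j * x.mat i j := by
      rw [Matrix.trace]
      refine Finset.sum_congr rfl fun i _ => ?_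
      rw [Matrix.diag_apply, Matrix.mul_apply]
      exact Finset.sum_congr rfl fun j _ => by rw [hz.apply i j]
    have h0 : ∑ i, ∑ j, x.mat i j * x.mat i j = 0 := by rw [← expand]; exact hx
    have hmat : x.mat = 0 := by
      ext i j
      have h1 := (Finset.sum_eq_zero_iff_of_nonneg (fun i _ =>
        Finset.sum_nonneg fun j _ => mul_self_nonneg _)).mp h0 i (Finset.mem_univ i)
      have h2 := (Finset.sum_eq_zero_iff_of_nonneg (fun j _ => mul_self_nonneg _)).mp h1 j
        (Finset.mem_univ j)
      simpa using mul_self_eq_zero.mp h2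
    exact Subtype.ext hmat
  add_left := by
    intro x y z
    simp only [mat_add, Matrix.add_mul, Matrix.trace_add]
  smul_left := by
    intro x y r
    simp only [mat_smul, Matrix.smul_mul, Matrix.trace_smul, smul_eq_mul]
    simp

noncomputable instance : NormedAddCommGroup (SymMat n) := (core n).toNormedAddCommGroup
noncomputable instance : InnerProductSpace ℝ (SymMat n) := InnerProductSpace.ofCore (core n).toCore
noncomputable instance : MeasurableSpace (SymMat n) := borel _
instance : BorelSpace (SymMat n) := ⟨rfl⟩

end SymMat

/-- The open cone `Ω ⊂ V` of positive definite symmetric matrices. -/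
def Omega (n : ℕ) : Set (SymMat n) := {z | z.mat.PosDef}

/-- `Φ_{α,β}(x) = ∫_Ω e^{-Tr z} (det z)^α (det (xᵀ z x))^β dz`, an integral of a
nonnegative function with value in `[0,∞]`. -/
noncomputable def Phi (n d : ℕ) (α β : ℝ) (x : Matrix (Fin n) (Fin d) ℝ) : ENNReal :=
  ∫⁻ z in Omega n,
    ENNReal.ofReal
      (Real.exp (-(z.mat.trace)) * z.mat.det ^ α * ((xᵀ * z.mat * x).det) ^ β)

/-- The matrix `𝕀_d ∈ M_{n,d}(ℝ)` whose top `d × d` block is the identity and whose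
remaining rows are zero. -/
def IdBlock (n d : ℕ) : Matrix (Fin n) (Fin d) ℝ :=
  Matrix.of fun i j => if (i : ℕ) = (j : ℕ) then 1 else 0

open scoped ENNReal

namespace Matrix

theorem IsSymm.transpose_mul_mul {m k R : Type*} [Fintype m] [CommSemiring R]
    {A : Matrix m m R} (hA : A.IsSymm) (B : Matrix m k R) : (Bᵀ * A * B).IsSymm := by
  simp only [IsSymm, transpose_mul, transpose_transpose, hA.eq, Matrix.mul_assoc]

section Orthogonal

variable {ι R : Type*} [Fintype ι] [DecidableEq ι] [CommRing R] {U : Matrix ι ι R}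

theorem trace_transpose_mul_mul_of_mem_orthogonalGroup (hU : U ∈ orthogonalGroup ι R)
    (A : Matrix ι ι R) : (Uᵀ * A * U).trace = A.trace := by
  rw [trace_mul_cycle, (mem_orthogonalGroup_iff ι R).mp hU, Matrix.one_mul]

theorem det_transpose_mul_mul_of_mem_orthogonalGroup (hU : U ∈ orthogonalGroup ι R)
    (A : Matrix ι ι R) : (Uᵀ * A * U).det = A.det := by
  rw [det_mul_comm, ← Matrix.mul_assoc, (mem_orthogonalGroup_iff ι R).mp hU, Matrix.one_mul]

end Orthogonal

theorem exists_orthogonal_mul_upperTriangular {ι : Type*} [Fintype ι] [LinearOrder ι]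
    [LocallyFiniteOrderBot ι] (A : Matrix ι ι ℝ) :
    ∃ Q ∈ orthogonalGroup ι ℝ, ∃ R : Matrix ι ι ℝ, R.IsUpperTriangular ∧ A = Q * R := by
  let f : ι → EuclideanSpace ℝ ι := fun j => WithLp.toLp 2 (fun i => A i j)
  let b := InnerProductSpace.gramSchmidtOrthonormalBasis finrank_euclideanSpace f
  let e := EuclideanSpace.basisFun ι ℝ
  refine ⟨e.toBasis.toMatrix b, e.toMatrix_orthonormalBasis_mem_orthogonal b, b.toBasis.toMatrix f,
    InnerProductSpace.gramSchmidtOrthonormalBasis_inv_isUpperTriangular _ f, ?_⟩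
  rw [← b.coe_toBasis, Module.Basis.toMatrix_mul_toMatrix]
  rfl

end Matrix

section IdBlock

variable {n d : ℕ}

theorem mul_IdBlock_apply (hdn : d ≤ n) {m : Type*} (A : Matrix m (Fin n) ℝ)
    (i : m) (j : Fin d) : (A * IdBlock n d) i j = A i (Fin.castLE hdn j) := by
  rw [mul_apply, Finset.sum_eq_single (Fin.castLE hdn j)]
  · simp [IdBlock]
  · intro k _ hk
    simp [IdBlock, show (k : ℕ) ≠ j from fun h => hk (Fin.ext h)]
  · simp

theorem transpose_IdBlock_mul_IdBlock (hdn : d ≤ n) : (IdBlock n d)ᵀ * IdBlock n d = 1 := by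
  ext i j
  rw [mul_IdBlock_apply hdn, transpose_apply, one_apply]
  simp [IdBlock, Fin.ext_iff, eq_comm]

theorem transpose_IdBlock_mul_apply (hdn : d ≤ n) {m : Type*} (A : Matrix (Fin n) m ℝ)
    (i : Fin d) (j : m) : ((IdBlock n d)ᵀ * A) i j = A (Fin.castLE hdn i) j := by
  rw [← transpose_apply (_ * _), transpose_mul, transpose_transpose, mul_IdBlock_apply hdn,
    transpose_apply]

theorem IdBlock_mul_apply {m : Type*} (M : Matrix (Fin d) m ℝ) (i : Fin n) (j : m) :
    (IdBlock n d * M) i j = if h : (i : ℕ) < d then M ⟨i, h⟩ j else 0 := by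
  rw [mul_apply]
  split_ifs with h
  · rw [Finset.sum_eq_single ⟨i, h⟩]
    · simp [IdBlock]
    · intro k _ hk
      simp [IdBlock, show (i : ℕ) ≠ k from fun h' => hk (Fin.ext h'.symm)]
    · simp
  · refine Finset.sum_eq_zero fun k _ => ?_
    simp [IdBlock, show (i : ℕ) ≠ k by omega]

theorem Matrix.IsUpperTriangular.mul_IdBlock (hdn : d ≤ n) {R : Matrix (Fin n) (Fin n) ℝ}
    (hR : R.IsUpperTriangular) :
    R * IdBlock n d = IdBlock n d * ((IdBlock n d)ᵀ * R * IdBlock n d) := by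
  ext i j
  rw [mul_IdBlock_apply hdn, IdBlock_mul_apply]
  split_ifs with hi
  · rw [Matrix.mul_assoc, transpose_IdBlock_mul_apply hdn, mul_IdBlock_apply hdn]
    rfl
  · exact hR (show Fin.castLE hdn j < i from Fin.lt_def.mpr (by rw [Fin.val_castLE]; omega))

theorem exists_eq_orthogonal_mul_IdBlock_mul (hdn : d ≤ n) (x : Matrix (Fin n) (Fin d) ℝ) :
    ∃ U ∈ orthogonalGroup (Fin n) ℝ, ∃ p : Matrix (Fin d) (Fin d) ℝ, x = U * IdBlock n d * p := by
  obtain ⟨U, hU, R, hR, hQR⟩ := (x * (IdBlock n d)ᵀ).exists_orthogonal_mul_upperTriangular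
  refine ⟨U, hU, (IdBlock n d)ᵀ * R * IdBlock n d, ?_⟩
  calc x = x * (IdBlock n d)ᵀ * IdBlock n d := by
        rw [Matrix.mul_assoc, transpose_IdBlock_mul_IdBlock hdn, Matrix.mul_one]
    _ = U * IdBlock n d * ((IdBlock n d)ᵀ * R * IdBlock n d) := by
        rw [hQR, Matrix.mul_assoc, hR.mul_IdBlock hdn]
        simp only [Matrix.mul_assoc]

end IdBlock

namespace SymMat

variable {n : ℕ}

def matₗ : SymMat n →ₗ[ℝ] Matrix (Fin n) (Fin n) ℝ where
  toFun := mat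
  map_add' := mat_add
  map_smul' := mat_smul

theorem continuous_mat : Continuous (mat : SymMat n → Matrix (Fin n) (Fin n) ℝ) :=
  matₗ.continuous_of_finiteDimensional

noncomputable def conjOrthogonal {U : Matrix (Fin n) (Fin n) ℝ}
    (hU : U ∈ orthogonalGroup (Fin n) ℝ) : SymMat n ≃ₗᵢ[ℝ] SymMat n :=
  have hUUt : U * Uᵀ = 1 := (mem_orthogonalGroup_iff (Fin n) ℝ).mp hU
  have hUtU : Uᵀ * U = 1 := (mem_orthogonalGroup_iff' (Fin n) ℝ).mp hU
  LinearEquiv.isometryOfInner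
    { toFun z := ⟨Uᵀ * z.mat * U, z.isSymm.transpose_mul_mul U⟩
      invFun z := ⟨U * z.mat * Uᵀ, by simpa using z.isSymm.transpose_mul_mul Uᵀ⟩
      map_add' z w := Subtype.ext <| show Uᵀ * (z + w).mat * U = Uᵀ * z.mat * U + Uᵀ * w.mat * U by
        rw [mat_add, Matrix.mul_add, Matrix.add_mul]
      map_smul' c z := Subtype.ext <| show Uᵀ * (c • z).mat * U = c • (Uᵀ * z.mat * U) by
        rw [mat_smul, Matrix.mul_smul, Matrix.smul_mul]
      left_inv z := Subtype.ext <| show U * (Uᵀ * z.mat * U) * Uᵀ = z.mat by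
        simp only [Matrix.mul_assoc, hUUt, Matrix.mul_one, ← Matrix.mul_assoc U Uᵀ, Matrix.one_mul]
      right_inv z := Subtype.ext <| show Uᵀ * (U * z.mat * Uᵀ) * U = z.mat by
        simp only [Matrix.mul_assoc, hUtU, Matrix.mul_one, ← Matrix.mul_assoc Uᵀ U, Matrix.one_mul] }
    fun z w => show ((Uᵀ * z.mat * U) * (Uᵀ * w.mat * U)).trace = (z.mat * w.mat).trace by
      rw [← trace_transpose_mul_mul_of_mem_orthogonalGroup hU (z.mat * w.mat)]
      simp only [Matrix.mul_assoc, ← Matrix.mul_assoc U Uᵀ, hUUt, Matrix.one_mul]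

theorem conjOrthogonal_mat {U : Matrix (Fin n) (Fin n) ℝ} (hU : U ∈ orthogonalGroup (Fin n) ℝ)
    (z : SymMat n) : (conjOrthogonal hU z).mat = Uᵀ * z.mat * U := rfl

end SymMat

open SymMat

theorem measurableSet_Omega (n : ℕ) : MeasurableSet (Omega n) := by
  have hPSD : IsClosed {z : SymMat n | z.mat.PosSemidef} := by
    have : {z : SymMat n | z.mat.PosSemidef} = ⋂ v : Fin n → ℝ, {z | 0 ≤ v ⬝ᵥ z.mat *ᵥ v} := by
      ext z
      simp [posSemidef_iff_dotProduct_mulVec, z.isSymm]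
    rw [this]
    exact isClosed_iInter fun v => isClosed_le continuous_const
      (continuous_const.dotProduct (continuous_mat.matrix_mulVec continuous_const))
  have hdet : IsOpen {z : SymMat n | z.mat.det ≠ 0} :=
    isOpen_ne_fun continuous_mat.matrix_det continuous_const
  have : Omega n = {z | z.mat.PosSemidef} ∩ {z | z.mat.det ≠ 0} :=
    Set.ext fun z => ⟨fun h => ⟨h.posSemidef, h.det_pos.ne'⟩,
      fun h => h.1.posDef_iff_det_ne_zero.mpr h.2⟩
  rw [this]
  exact hPSD.measurableSet.inter hdet.measurableSet

theorem preimage_conjOrthogonal_Omega {n : ℕ} {U : Matrix (Fin n) (Fin n) ℝ}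
    (hU : U ∈ orthogonalGroup (Fin n) ℝ) : conjOrthogonal hU ⁻¹' Omega n = Omega n := by
  ext z
  have := (Unitary.isUnit_coe (U := ⟨U, hU⟩)).posDef_star_left_conjugate_iff (x := z.mat)
  simpa [Omega, conjOrthogonal_mat, star_eq_conjTranspose] using this

section Phi

variable {n d : ℕ} (α β : ℝ)

noncomputable def phiIntegrand (x : Matrix (Fin n) (Fin d) ℝ) (z : SymMat n) : ℝ≥0∞ :=
  ENNReal.ofReal (Real.exp (-(z.mat.trace)) * z.mat.det ^ α * ((xᵀ * z.mat * x).det) ^ β)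

theorem Phi_eq_setLIntegral (x : Matrix (Fin n) (Fin d) ℝ) :
    Phi n d α β x = ∫⁻ z in Omega n, phiIntegrand α β x z := rfl

theorem phiIntegrand_orthogonal_mul {U : Matrix (Fin n) (Fin n) ℝ}
    (hU : U ∈ orthogonalGroup (Fin n) ℝ) (y : Matrix (Fin n) (Fin d) ℝ) (z : SymMat n) :
    phiIntegrand α β (U * y) z = phiIntegrand α β y (conjOrthogonal hU z) := by
  have hconj : (U * y)ᵀ * z.mat * (U * y) = yᵀ * (Uᵀ * z.mat * U) * y := by
    simp only [transpose_mul, Matrix.mul_assoc]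
  rw [phiIntegrand, phiIntegrand, conjOrthogonal_mat, hconj,
    trace_transpose_mul_mul_of_mem_orthogonalGroup hU,
    det_transpose_mul_mul_of_mem_orthogonalGroup hU]

theorem Phi_orthogonal_mul {U : Matrix (Fin n) (Fin n) ℝ}
    (hU : U ∈ orthogonalGroup (Fin n) ℝ) (y : Matrix (Fin n) (Fin d) ℝ) :
    Phi n d α β (U * y) = Phi n d α β y := by
  let e := conjOrthogonal hU
  calc Phi n d α β (U * y)
      = ∫⁻ z in e ⁻¹' Omega n, phiIntegrand α β y (e z) := by
        simp only [Phi_eq_setLIntegral, preimage_conjOrthogonal_Omega hU,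
          phiIntegrand_orthogonal_mul α β hU, e]
    _ = Phi n d α β y :=
        e.measurePreserving.setLIntegral_comp_preimage_emb e.toHomeomorph.measurableEmbedding _ _

theorem phiIntegrand_mul_right (y : Matrix (Fin n) (Fin d) ℝ) (p : Matrix (Fin d) (Fin d) ℝ)
    {z : SymMat n} (hz : z ∈ Omega n) :
    phiIntegrand α β (y * p) z = ENNReal.ofReal ((pᵀ * p).det ^ β) * phiIntegrand α β y z := by
  have hdet : ((y * p)ᵀ * z.mat * (y * p)).det = (pᵀ * p).det * (yᵀ * z.mat * y).det := by
    rw [show (y * p)ᵀ * z.mat * (y * p) = pᵀ * (yᵀ * z.mat * y) * p by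
      simp only [transpose_mul, Matrix.mul_assoc]]
    simp only [det_mul]
    ring
  have hp : 0 ≤ (pᵀ * p).det := by
    rw [det_mul, det_transpose]
    exact mul_self_nonneg _
  have hy : 0 ≤ (yᵀ * z.mat * y).det := by
    simpa using (hz.posSemidef.conjTranspose_mul_mul_same y).det_nonneg
  rw [phiIntegrand, phiIntegrand, hdet, Real.mul_rpow hp hy,
    ← ENNReal.ofReal_mul (Real.rpow_nonneg hp β)]
  congr 1
  ring

theorem Phi_mul_right (y : Matrix (Fin n) (Fin d) ℝ) (p : Matrix (Fin d) (Fin d) ℝ) :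
    Phi n d α β (y * p) = ENNReal.ofReal ((pᵀ * p).det ^ β) * Phi n d α β y := by
  rw [Phi_eq_setLIntegral, Phi_eq_setLIntegral, ← lintegral_const_mul' _ _ ENNReal.ofReal_ne_top]
  exact setLIntegral_congr_fun (measurableSet_Omega n) fun z hz =>
    phiIntegrand_mul_right α β y p hz

end Phi

theorem Phi_eq_det_pow_mul_Phi_IdBlock_general (n d : ℕ) (hdn : d ≤ n) (α β : ℝ)
    (x : Matrix (Fin n) (Fin d) ℝ) :
    Phi n d α β x = ENNReal.ofReal (((xᵀ * x).det) ^ β) * Phi n d α β (IdBlock n d) := by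
  obtain ⟨U, hU, p, rfl⟩ := exists_eq_orthogonal_mul_IdBlock_mul hdn x
  have hxx : (U * IdBlock n d * p)ᵀ * (U * IdBlock n d * p) = pᵀ * p := by
    simp only [transpose_mul, Matrix.mul_assoc]
    rw [← Matrix.mul_assoc Uᵀ, (mem_orthogonalGroup_iff' (Fin n) ℝ).mp hU, Matrix.one_mul,
      ← Matrix.mul_assoc (IdBlock n d)ᵀ, transpose_IdBlock_mul_IdBlock hdn, Matrix.one_mul]
  rw [hxx, Matrix.mul_assoc, Phi_orthogonal_mul α β hU, Phi_mul_right]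

/-- for every `x ∈ M_{n,d}(ℝ)` of rank `d`,
`Φ_{α,β}(x) = det(xᵀx)^β · Φ_{α,β}(𝕀_d)`, as an equality in `[0,∞]`. -/
theorem Phi_eq_det_pow_mul_Phi_IdBlock (n d : ℕ) (hd : 1 ≤ d) (hdn : d ≤ n) (α β : ℝ)
    (x : Matrix (Fin n) (Fin d) ℝ) (hx : x.rank = d) :
    Phi n d α β x = ENNReal.ofReal (((xᵀ * x).det) ^ β) * Phi n d α β (IdBlock n d) :=
  Phi_eq_det_pow_mul_Phi_IdBlock_general n d hdn α β x
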